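/- arXiv:2209.02808 — 2 statements merged into one kernel-verified Lean document; each statement's English description precedes it below -/
import Mathlib

section
/- For every n ≥ 1, the GHZ state is an eigenvector of the MABK operator with eigenvalue 2^(n−1): M_n.mulVec GHZ_n = (2^(n−1) : ℂ) • GHZ_n. Hence the quantum value of the MABK expression on the GHZ state is 2^{n−1}. -/
/-!
Since `X + iY = 2 |0⟩⟨1|` and `X - iY = 2 |1⟩⟨0|`, the two tensor powers are the rank-one
operators `2ⁿ |0…0⟩⟨1…1|` and `2ⁿ |1…1⟩⟨0…0|`. Hence `M_n` only exchanges the two GHZ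
amplitudes `1/√2` and `i/√2`, multiplying them by `2ⁿ/(2i)` and `-2ⁿ/(2i)` respectively, which
returns `2ⁿ⁻¹` times the same pair.
-/

open Matrix BigOperators

noncomputable section

/-- Pauli X matrix. -/
def pauliX : Matrix (Fin 2) (Fin 2) ℂ := !![0, 1; 1, 0]

/-- Pauli Y matrix. -/
def pauliY : Matrix (Fin 2) (Fin 2) ℂ := !![0, -Complex.I; Complex.I, 0]

/-- n-fold tensor (Kronecker) product of a family of 2×2 matrices,
defined entrywise by `T(A) f g = ∏ j, (A j) (f j) (g j)`. -/
def tensor {n : ℕ} (A : Fin n → Matrix (Fin 2) (Fin 2) ℂ) :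
    Matrix (Fin n → Fin 2) (Fin n → Fin 2) ℂ :=
  Matrix.of fun f g => ∏ j, A j (f j) (g j)

/-- The n-partite MABK operator
`M_n = (1/(2i)) (⊗ⱼ (X + iY) − ⊗ⱼ (X − iY))`. -/
def MABK (n : ℕ) : Matrix (Fin n → Fin 2) (Fin n → Fin 2) ℂ :=
  (1 / (2 * Complex.I)) •
    (tensor (fun _ : Fin n => pauliX + Complex.I • pauliY)
      - tensor (fun _ : Fin n => pauliX - Complex.I • pauliY))

/-- The n-qubit GHZ state `(|0…0⟩ + i|1…1⟩)/√2`. -/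
def GHZ (n : ℕ) : (Fin n → Fin 2) → ℂ :=
  fun f =>
    if f = fun _ => 0 then 1 / (Real.sqrt 2 : ℂ)
    else if f = fun _ => 1 then Complex.I / (Real.sqrt 2 : ℂ)
    else 0

/-- The phase-flipped n-qubit GHZ state `(|0…0⟩ − i|1…1⟩)/√2`. -/
def GHZ' (n : ℕ) : (Fin n → Fin 2) → ℂ :=
  fun f =>
    if f = fun _ => 0 then 1 / (Real.sqrt 2 : ℂ)
    else if f = fun _ => 1 then -Complex.I / (Real.sqrt 2 : ℂ)
    else 0

lemma pauliX_add_I_smul_pauliY : pauliX + Complex.I • pauliY = single 0 1 2 := by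
  ext a b
  fin_cases a <;> fin_cases b <;> norm_num [pauliX, pauliY]

lemma pauliX_sub_I_smul_pauliY : pauliX - Complex.I • pauliY = single 1 0 2 := by
  ext a b
  fin_cases a <;> fin_cases b <;> norm_num [pauliX, pauliY]

lemma tensor_single {n : ℕ} (a b : Fin n → Fin 2) (c : Fin n → ℂ) :
    tensor (fun j => single (a j) (b j) (c j)) = single a b (∏ j, c j) := by
  ext f g
  simp only [tensor, of_apply, single_apply, Finset.prod_ite_zero, Finset.mem_univ,
    true_implies, funext_iff, forall_and]

lemma MABK_eq_smul_sub_single (n : ℕ) :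
    MABK n = (1 / (2 * Complex.I)) •
      (single (fun _ => 0) (fun _ => 1) (2 ^ n) - single (fun _ => 1) (fun _ => 0) (2 ^ n)) := by
  simp only [MABK, pauliX_add_I_smul_pauliY, pauliX_sub_I_smul_pauliY, tensor_single,
    Finset.prod_const, Finset.card_univ, Fintype.card_fin]

lemma const_zero_ne_const_one {n : ℕ} (hn : 1 ≤ n) :
    (fun _ : Fin n => (0 : Fin 2)) ≠ fun _ => 1 :=
  fun h => by simpa using congrFun h ⟨0, hn⟩

lemma GHZ_const_zero (n : ℕ) : GHZ n (fun _ => 0) = 1 / (Real.sqrt 2 : ℂ) := by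
  simp [GHZ]

lemma GHZ_const_one {n : ℕ} (hn : 1 ≤ n) : GHZ n (fun _ => 1) = Complex.I / (Real.sqrt 2 : ℂ) := by
  simp [GHZ, (const_zero_ne_const_one hn).symm]

/-- The GHZ state is an eigenvector of the MABK operator with eigenvalue 2^(n−1). -/
theorem mabk_ghz_eigen (n : ℕ) (hn : 1 ≤ n) :
    (MABK n).mulVec (GHZ n) = (2 ^ (n - 1) : ℂ) • GHZ n := by
  have hne := const_zero_ne_const_one hn
  have hpow : (2 : ℂ) ^ n = 2 * 2 ^ (n - 1) := by
    rw [← pow_succ', Nat.sub_add_cancel hn]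
  rw [MABK_eq_smul_sub_single, smul_mulVec, sub_mulVec, single_mulVec, single_mulVec,
    GHZ_const_zero, GHZ_const_one hn]
  ext f
  simp only [Pi.smul_apply, Pi.sub_apply, smul_eq_mul]
  by_cases h0 : f = fun _ => 0
  · subst h0
    rw [Function.update_self, Function.update_of_ne hne, Pi.zero_apply, sub_zero,
      GHZ_const_zero, hpow]
    field_simp
  by_cases h1 : f = fun _ => 1
  · subst h1
    rw [Function.update_of_ne hne.symm, Function.update_self, Pi.zero_apply, zero_sub,
      GHZ_const_one hn, hpow]
    field_simp
    simp [Complex.I_sq]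
  · simp [GHZ, h0, h1]
end
end

section
/- Let n ≥ 1 and let C : Fin n → Fin n → Bool satisfy C j k = C k j for all j, k and C j j = false. Then the stabilizing operators pairwise commute: S_j * S_k = S_k * S_j for all j, k : Fin n. -/
open Matrix BigOperators

noncomputable section

/-- Pauli Z matrix. -/
def pauliZ : Matrix (Fin 2) (Fin 2) ℂ := !![1, 0; 0, -1]

/-- The stabilizing operator S_j = X^{(j)} ∏ₖ (Z^{(k)})^{C j k} of the graph
state with adjacency matrix C. -/
def stab {n : ℕ} (C : Fin n → Fin n → Bool) (j : Fin n) :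
    Matrix (Fin n → Fin 2) (Fin n → Fin 2) ℂ :=
  tensor (fun k => if k = j then pauliX else if C j k then pauliZ else 1)

/-- The local Pauli-Z operator Z_k acting on the k-th qubit. -/
def Zop {n : ℕ} (k : Fin n) :
    Matrix (Fin n → Fin 2) (Fin n → Fin 2) ℂ :=
  tensor (fun m => if m = k then pauliZ else 1)

/-! The tensor product is multiplicative site by site, so `S_j S_k` and `S_k S_j` differ by the
product of the local commutation signs. For `j ≠ k` an `X` meets a `Z` only at site `j` (when
`C k j`) and at site `k` (when `C j k`); by symmetry of `C` these two signs `-1` occur together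
and cancel. -/

section Tensor

variable {n : ℕ}

lemma tensor_mul (A B : Fin n → Matrix (Fin 2) (Fin 2) ℂ) :
    tensor A * tensor B = tensor (fun j => A j * B j) := by
  ext f g
  simp only [tensor, mul_apply, of_apply, ← Finset.prod_mul_distrib]
  rw [Finset.prod_univ_sum, Fintype.piFinset_univ]

lemma tensor_smul (c : Fin n → ℂ) (A : Fin n → Matrix (Fin 2) (Fin 2) ℂ) :
    tensor (fun j => c j • A j) = (∏ j, c j) • tensor A := by
  ext f g
  simp [tensor, Finset.prod_mul_distrib]

lemma commute_tensor_of_mul_eq_smul {A B : Fin n → Matrix (Fin 2) (Fin 2) ℂ} (s : Fin n → ℂ)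
    (h : ∀ j, A j * B j = s j • (B j * A j)) (hs : ∏ j, s j = 1) :
    Commute (tensor A) (tensor B) := by
  rw [Commute, SemiconjBy, tensor_mul, tensor_mul, funext h, tensor_smul, hs, one_smul]

end Tensor

lemma pauliX_mul_pauliZ : pauliX * pauliZ = -(pauliZ * pauliX) := by
  ext i j
  fin_cases i <;> fin_cases j <;> simp [pauliX, pauliZ, Matrix.mul_apply]

def stabFactor {n : ℕ} (C : Fin n → Fin n → Bool) (j m : Fin n) : Matrix (Fin 2) (Fin 2) ℂ :=
  if m = j then pauliX else if C j m then pauliZ else 1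

lemma stab_eq_tensor {n : ℕ} (C : Fin n → Fin n → Bool) (j : Fin n) :
    stab C j = tensor (stabFactor C j) := rfl

lemma stabFactor_mul_stabFactor {n : ℕ} (C : Fin n → Fin n → Bool) {j k : Fin n} (hjk : j ≠ k)
    (m : Fin n) :
    stabFactor C j m * stabFactor C k m =
      ((if m = j ∧ C k j then -1 else 1 : ℂ) * (if m = k ∧ C j k then -1 else 1)) •
        (stabFactor C k m * stabFactor C j m) := by
  unfold stabFactor
  by_cases hmj : m = j <;> by_cases hmk : m = k
  · exact absurd (hmj.symm.trans hmk) hjk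
  · subst hmj
    cases C k m <;> simp [hmk, pauliX_mul_pauliZ]
  · subst hmk
    cases C j m <;> simp [hmj, pauliX_mul_pauliZ]
  · cases C j m <;> cases C k m <;> simp [hmj, hmk]

theorem stab_commute_general (n : ℕ) (C : Fin n → Fin n → Bool)
    (hsymm : ∀ j k, C j k = C k j) :
    ∀ j k : Fin n, stab C j * stab C k = stab C k * stab C j := by
  intro j k
  rcases eq_or_ne j k with rfl | hjk
  · rfl
  rw [stab_eq_tensor, stab_eq_tensor]
  refine (commute_tensor_of_mul_eq_smul _ (stabFactor_mul_stabFactor C hjk) ?_).eq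
  rw [Finset.prod_mul_distrib]
  simp only [ite_and, Finset.prod_ite_eq', Finset.mem_univ, if_true, hsymm k j]
  cases C j k <;> norm_num

/-- The stabilizing operators of a graph state pairwise commute. -/
theorem stab_commute (n : ℕ) (hn : 1 ≤ n) (C : Fin n → Fin n → Bool)
    (hsymm : ∀ j k, C j k = C k j) (hdiag : ∀ j, C j j = false) :
    ∀ j k : Fin n, stab C j * stab C k = stab C k * stab C j :=
  stab_commute_general n C hsymm
end
end
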